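/- Let R̂ > 0 and 0 < ξ < R̂ be real numbers, K > 0, and let F : ℂ → ℂ be an entire function such that for all k ∈ ℂ with |k| ≥ 1, |F(k) + R̂·cos(k(R̂−ξ)) + sin(k(R̂−ξ))/k| ≤ (K/|k|)·exp(|Im k|·(R̂−ξ)). Then for every θ ∈ [0, 2π], the Lindelöf indicator of F in the direction θ equals (R̂−ξ)·|sin θ|; that is, limsup_{r→∞} (log |F(r·e^{iθ})|)/r = (R̂−ξ)·|sin θ|. -/

import Mathlib

/-!
Put `a = R̂ - ξ` and `k = r e^{iθ}`, so that `|Im (k a)| = a |sin θ| r`. Since `|cos z|` and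
`|sin z|` are at most `e^{|Im z|}`, the asymptotic estimate gives `|F k| ≤ C e^{a |sin θ| r}` for
`r ≥ 1`. Conversely `|cos z| ≥ |cos (Re z)| cosh (Im z)`, which is at least `e^{|Im z|} / 2` along
the radii with `r a cos θ ∈ 2πℤ`; there the term `R̂ cos (k a)` dominates and
`|F k| ≥ (R̂ / 4) e^{a |sin θ| r}`. An upper bound for all large `r` and a lower bound for
arbitrarily large `r`, both of the form `e^{a |sin θ| r + O(1)}`, pin the limsup at `a |sin θ|`.
-/

open Filter

namespace Complex

theorem norm_exp_mul_I_le_exp_abs_im (z : ℂ) : ‖exp (z * I)‖ ≤ Real.exp |z.im| := by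
  rw [norm_exp]
  simpa using Real.exp_le_exp.2 (neg_le_abs z.im)

theorem norm_cos_le_exp_abs_im (z : ℂ) : ‖cos z‖ ≤ Real.exp |z.im| := by
  have h₁ := norm_exp_mul_I_le_exp_abs_im z
  have h₂ := norm_exp_mul_I_le_exp_abs_im (-z)
  rw [neg_im, abs_neg] at h₂
  calc ‖cos z‖ ≤ (‖exp (z * I)‖ + ‖exp (-z * I)‖) / 2 := by
        rw [cos, norm_div, RCLike.norm_ofNat]; gcongr; exact norm_add_le _ _
    _ ≤ Real.exp |z.im| := by linarith

theorem norm_sin_le_exp_abs_im (z : ℂ) : ‖sin z‖ ≤ Real.exp |z.im| := by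
  have h₁ := norm_exp_mul_I_le_exp_abs_im z
  have h₂ := norm_exp_mul_I_le_exp_abs_im (-z)
  rw [neg_im, abs_neg] at h₂
  calc ‖sin z‖ ≤ (‖exp (-z * I)‖ + ‖exp (z * I)‖) / 2 := by
        rw [sin, norm_div, norm_mul, norm_I, mul_one, RCLike.norm_ofNat]
        gcongr; exact norm_sub_le _ _
    _ ≤ Real.exp |z.im| := by linarith

theorem abs_cos_re_mul_cosh_im_le_norm_cos (z : ℂ) :
    |Real.cos z.re| * Real.cosh z.im ≤ ‖cos z‖ := by
  have hre : (cos z).re = Real.cos z.re * Real.cosh z.im := by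
    conv_lhs => rw [← re_add_im z, cos_add_mul_I]
    simp [← ofReal_cos, ← ofReal_cosh, ← ofReal_sin, ← ofReal_sinh]
  calc |Real.cos z.re| * Real.cosh z.im = |(cos z).re| := by
        rw [hre, abs_mul, abs_of_pos (Real.cosh_pos _)]
    _ ≤ ‖cos z‖ := abs_re_le_norm _

theorem abs_im_mul_ofReal (k : ℂ) {a : ℝ} (ha : 0 ≤ a) : |(k * a).im| = |k.im| * a := by
  simp [abs_mul, abs_of_nonneg ha]

theorem abs_im_ofReal_mul_exp_mul_I_mul (a : ℝ) {r : ℝ} (hr : 0 ≤ r) (θ : ℝ) :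
    |((r : ℂ) * exp (θ * I)).im| * a = a * |Real.sin θ| * r := by
  simp [exp_ofReal_mul_I_im, abs_mul, abs_of_nonneg hr]; ring

end Complex

theorem Real.exp_abs_div_two_le_cosh (x : ℝ) : exp |x| / 2 ≤ cosh x := by
  rw [← cosh_abs, cosh_eq]
  have := (exp_pos (-|x|)).le
  linarith

theorem Real.frequently_cos_mul_eq_one (b : ℝ) : ∃ᶠ r in atTop, cos (r * b) = 1 := by
  rcases eq_or_ne b 0 with rfl | hb
  · exact (Eventually.of_forall fun r => by simp).frequently
  rw [frequently_atTop]
  intro M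
  obtain ⟨n, hn⟩ := exists_nat_ge (M * |b| / (2 * Real.pi))
  refine ⟨n * (2 * Real.pi) / |b|, ?_, ?_⟩
  · rw [le_div_iff₀ (abs_pos.2 hb)]
    rwa [div_le_iff₀ (by positivity)] at hn
  · rw [← cos_abs, abs_mul, abs_div, abs_abs,
      abs_of_nonneg (by positivity : (0 : ℝ) ≤ n * (2 * Real.pi)),
      div_mul_cancel₀ _ (abs_ne_zero.2 hb), cos_nat_mul_two_pi]

theorem Filter.limsup_eq_of_eventually_le_add_of_frequently_sub_le {α : Type*} {l : Filter α}
    {f : α → ℝ} {L : ℝ}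
    (hle : ∀ ε > 0, ∀ᶠ x in l, f x ≤ L + ε) (hge : ∀ ε > 0, ∃ᶠ x in l, L - ε ≤ f x) :
    limsup f l = L := by
  have hbdd : IsBoundedUnder (· ≤ ·) l f := ⟨L + 1, hle 1 one_pos⟩
  have hcobdd : IsCoboundedUnder (· ≤ ·) l f := .of_frequently_ge (hge 1 one_pos)
  refine le_antisymm (le_of_forall_pos_le_add fun ε hε => limsup_le_of_le hcobdd (hle ε hε))
    (le_of_forall_pos_le_add fun ε hε => ?_)
  linarith [le_limsup_of_frequently_le (hge ε hε) hbdd]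

section Growth

variable {E : Type*} [NormedAddCommGroup E] {f : ℝ → E} {L : ℝ}

theorem eventually_log_norm_div_le_of_norm_le_mul_exp {C : ℝ} (hL : 0 ≤ L) (hC : 0 < C)
    (h : ∀ᶠ r in atTop, ‖f r‖ ≤ C * Real.exp (L * r)) {ε : ℝ} (hε : 0 < ε) :
    ∀ᶠ r in atTop, Real.log ‖f r‖ / r ≤ L + ε := by
  have hC_div : ∀ᶠ r in atTop, Real.log C / r < ε :=
    (tendsto_const_nhds.div_atTop tendsto_id).eventually (gt_mem_nhds hε)
  filter_upwards [h, hC_div, eventually_gt_atTop 0] with r hle hCr hr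
  rcases (norm_nonneg (f r)).eq_or_lt with h0 | hpos
  · rw [← h0, Real.log_zero, zero_div]
    linarith
  have hlog : Real.log ‖f r‖ ≤ Real.log C + L * r := by
    simpa [Real.log_mul hC.ne' (Real.exp_ne_zero _)] using Real.log_le_log hpos hle
  calc Real.log ‖f r‖ / r ≤ (Real.log C + L * r) / r := by gcongr
    _ = Real.log C / r + L := by field_simp
    _ ≤ L + ε := by linarith

theorem frequently_sub_le_log_norm_div_of_mul_exp_le_norm {c : ℝ} (hc : 0 < c)
    (h : ∃ᶠ r in atTop, c * Real.exp (L * r) ≤ ‖f r‖) {ε : ℝ} (hε : 0 < ε) :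
    ∃ᶠ r in atTop, L - ε ≤ Real.log ‖f r‖ / r := by
  have hc_div : ∀ᶠ r in atTop, -ε < Real.log c / r :=
    (tendsto_const_nhds.div_atTop tendsto_id).eventually (lt_mem_nhds (neg_lt_zero.2 hε))
  refine (h.and_eventually (hc_div.and (eventually_gt_atTop 0))).mono ?_
  rintro r ⟨hle, hcr, hr⟩
  have hlog : Real.log c + L * r ≤ Real.log ‖f r‖ := by
    simpa [Real.log_mul hc.ne' (Real.exp_ne_zero _)] using
      Real.log_le_log (by positivity) hle
  calc L - ε ≤ Real.log c / r + L := by linarith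
    _ = (Real.log c + L * r) / r := by field_simp
    _ ≤ Real.log ‖f r‖ / r := by gcongr

theorem limsup_log_norm_div_eq_of_mul_exp_bounds {c C : ℝ} (hL : 0 ≤ L) (hc : 0 < c)
    (hC : 0 < C) (hup : ∀ᶠ r in atTop, ‖f r‖ ≤ C * Real.exp (L * r))
    (hlow : ∃ᶠ r in atTop, c * Real.exp (L * r) ≤ ‖f r‖) :
    limsup (fun r => Real.log ‖f r‖ / r) atTop = L :=
  limsup_eq_of_eventually_le_add_of_frequently_sub_le
    (fun _ hε => eventually_log_norm_div_le_of_norm_le_mul_exp hL hC hup hε)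
    fun _ hε => frequently_sub_le_log_norm_div_of_mul_exp_le_norm hc hlow hε

end Growth

/-- The estimate (3.4), with `R = R̂` and `a = R̂ - ξ`. -/
def HasCosSinAsymptotics (F : ℂ → ℂ) (R a K : ℝ) : Prop :=
  ∀ k : ℂ, 1 ≤ ‖k‖ →
    ‖F k + R * Complex.cos (k * a) + Complex.sin (k * a) / k‖ ≤
      K / ‖k‖ * Real.exp (|k.im| * a)

namespace HasCosSinAsymptotics

open Complex

variable {F : ℂ → ℂ} {R a K : ℝ} {k : ℂ}

theorem norm_le (h : HasCosSinAsymptotics F R a K) (ha : 0 ≤ a) (hK : 0 ≤ K) (hk : 1 ≤ ‖k‖) :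
    ‖F k‖ ≤ (|R| + 1 + K) * Real.exp (|k.im| * a) := by
  set X := F k + R * cos (k * a) + sin (k * a) / k
  have hcos := norm_cos_le_exp_abs_im (k * a)
  have hsin := norm_sin_le_exp_abs_im (k * a)
  rw [abs_im_mul_ofReal k ha] at hcos hsin
  calc ‖F k‖ = ‖X - R * cos (k * a) - sin (k * a) / k‖ := by congr 1; ring
    _ ≤ ‖X‖ + |R| * ‖cos (k * a)‖ + ‖sin (k * a)‖ / ‖k‖ := by
      grw [norm_sub_le, norm_sub_le, norm_mul, norm_div, norm_real, Real.norm_eq_abs]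
    _ ≤ K / ‖k‖ * Real.exp (|k.im| * a) + |R| * Real.exp (|k.im| * a)
        + Real.exp (|k.im| * a) / ‖k‖ := by grw [h k hk, hcos, hsin]
    _ ≤ K * Real.exp (|k.im| * a) + |R| * Real.exp (|k.im| * a) + Real.exp (|k.im| * a) := by
      gcongr <;> exact div_le_self (by positivity) hk
    _ = (|R| + 1 + K) * Real.exp (|k.im| * a) := by ring

theorem le_norm (h : HasCosSinAsymptotics F R a K) (ha : 0 ≤ a) (hk : 1 ≤ ‖k‖) :
    |R| * ‖cos (k * a)‖ - (1 + K) / ‖k‖ * Real.exp (|k.im| * a) ≤ ‖F k‖ := by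
  set X := F k + R * cos (k * a) + sin (k * a) / k
  have hsin := norm_sin_le_exp_abs_im (k * a)
  rw [abs_im_mul_ofReal k ha] at hsin
  have : |R| * ‖cos (k * a)‖ ≤ ‖X‖ + ‖F k‖ + ‖sin (k * a)‖ / ‖k‖ := by
    calc |R| * ‖cos (k * a)‖ = ‖X - F k - sin (k * a) / k‖ := by
          rw [← Real.norm_eq_abs, ← norm_real, ← norm_mul]; congr 1; ring
      _ ≤ ‖X‖ + ‖F k‖ + ‖sin (k * a)‖ / ‖k‖ := by grw [norm_sub_le, norm_sub_le, norm_div]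
  grw [h k hk, hsin] at this
  have hsplit : (1 + K) / ‖k‖ * Real.exp (|k.im| * a)
      = K / ‖k‖ * Real.exp (|k.im| * a) + Real.exp (|k.im| * a) / ‖k‖ := by ring
  linarith

theorem eventually_norm_le_on_ray (h : HasCosSinAsymptotics F R a K) (ha : 0 ≤ a) (hK : 0 ≤ K)
    (θ : ℝ) :
    ∀ᶠ r : ℝ in atTop,
      ‖F (r * exp (θ * I))‖ ≤ (|R| + 1 + K) * Real.exp (a * |Real.sin θ| * r) := by
  filter_upwards [eventually_ge_atTop 1] with r hr
  have hr₀ : (0 : ℝ) ≤ r := zero_le_one.trans hr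
  rw [← abs_im_ofReal_mul_exp_mul_I_mul a hr₀]
  exact h.norm_le ha hK (by simpa [abs_of_nonneg hr₀] using hr)

theorem frequently_le_norm_on_ray (h : HasCosSinAsymptotics F R a K) (hR : R ≠ 0) (ha : 0 ≤ a)
    (θ : ℝ) :
    ∃ᶠ r : ℝ in atTop, |R| / 4 * Real.exp (a * |Real.sin θ| * r) ≤ ‖F (r * exp (θ * I))‖ := by
  refine ((Real.frequently_cos_mul_eq_one (a * Real.cos θ)).and_eventually
    (eventually_ge_atTop (max 1 (4 * (1 + K) / |R|)))).mono ?_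
  rintro r ⟨hcos, hr⟩
  have hr₁ : 1 ≤ r := le_of_max_le_left hr
  have hr₀ : (0 : ℝ) ≤ r := zero_le_one.trans hr₁
  set k : ℂ := r * exp (θ * I)
  set E := Real.exp (a * |Real.sin θ| * r)
  have hk : ‖k‖ = r := by simp [k, hr₀]
  have hre : (k * a).re = r * (a * Real.cos θ) := by
    simp [k, exp_ofReal_mul_I_im, exp_ofReal_mul_I_re]; ring
  -- Here `(k * a).re ∈ 2πℤ`, so `‖cos (k * a)‖ = cosh (k * a).im`.
  have hcos_ge : E / 2 ≤ ‖cos (k * a)‖ :=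
    calc E / 2 = Real.exp |(k * a).im| / 2 := by
          rw [abs_im_mul_ofReal k ha, abs_im_ofReal_mul_exp_mul_I_mul a hr₀]
      _ ≤ |Real.cos (k * a).re| * Real.cosh (k * a).im := by
        rw [hre, hcos, abs_one, one_mul]; exact Real.exp_abs_div_two_le_cosh _
      _ ≤ ‖cos (k * a)‖ := abs_cos_re_mul_cosh_im_le_norm_cos _
  have hsmall : (1 + K) / r ≤ |R| / 4 := by
    rw [div_le_iff₀ (one_pos.trans_le hr₁)]
    have := le_of_max_le_right hr
    rw [div_le_iff₀ (abs_pos.2 hR)] at this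
    linarith
  have hlow := h.le_norm ha (hk.symm ▸ hr₁ : 1 ≤ ‖k‖)
  rw [hk, abs_im_ofReal_mul_exp_mul_I_mul a hr₀] at hlow
  calc |R| / 4 * E = |R| * (E / 2) - |R| / 4 * E := by ring
    _ ≤ |R| * ‖cos (k * a)‖ - (1 + K) / r * E := by gcongr
    _ ≤ ‖F k‖ := hlow

end HasCosSinAsymptotics

theorem lindelof_indicator_general
    (Rhat ξ K : ℝ) (hR : 0 < Rhat) (hξR : ξ < Rhat) (hK : 0 < K)
    (F : ℂ → ℂ)
    (hasym : ∀ k : ℂ, 1 ≤ ‖k‖ →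
      ‖F k + (Rhat : ℂ) * Complex.cos (k * (Rhat - ξ)) + Complex.sin (k * (Rhat - ξ)) / k‖
        ≤ (K / ‖k‖) * Real.exp (|k.im| * (Rhat - ξ))) :
    ∀ θ ∈ Set.Icc (0 : ℝ) (2 * Real.pi),
      limsup (fun r : ℝ =>
          Real.log ‖F ((r : ℂ) * Complex.exp (θ * Complex.I))‖ / r) atTop
        = (Rhat - ξ) * |Real.sin θ| := by
  intro θ _
  have ha : 0 ≤ Rhat - ξ := (sub_pos.2 hξR).le
  have h : HasCosSinAsymptotics F Rhat (Rhat - ξ) K := by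
    intro k hk
    push_cast
    exact hasym k hk
  exact limsup_log_norm_div_eq_of_mul_exp_bounds (mul_nonneg ha (abs_nonneg _))
    (by positivity : 0 < |Rhat| / 4) (by positivity)
    (h.eventually_norm_le_on_ray ha hK.le θ) (h.frequently_le_norm_on_ray hR.ne' ha θ)

/-- **(3.6).** The Lindelöf indicator of an entire function `F` satisfying the asymptotic
estimate (3.4) equals `(R̂ − ξ)|sin θ|` in every direction `θ ∈ [0, 2π]`. -/
theorem lindelof_indicator
    (Rhat ξ K : ℝ) (hR : 0 < Rhat) (hξ0 : 0 < ξ) (hξR : ξ < Rhat) (hK : 0 < K)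
    (F : ℂ → ℂ) (hF : Differentiable ℂ F)
    (hasym : ∀ k : ℂ, 1 ≤ ‖k‖ →
      ‖F k + (Rhat : ℂ) * Complex.cos (k * (Rhat - ξ)) + Complex.sin (k * (Rhat - ξ)) / k‖
        ≤ (K / ‖k‖) * Real.exp (|k.im| * (Rhat - ξ))) :
    ∀ θ ∈ Set.Icc (0 : ℝ) (2 * Real.pi),
      limsup (fun r : ℝ =>
          Real.log ‖F ((r : ℂ) * Complex.exp (θ * Complex.I))‖ / r) atTop
        = (Rhat - ξ) * |Real.sin θ| :=
  lindelof_indicator_general Rhat ξ K hR hξR hK F hasym
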